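/- Let $F$ be a distribution function with survival function $\overline{F}(t) > 0$ for all $t$ such that $F$ is regularly varying at infinity with index $\gamma > 0$, i.e., $\overline{F}(at)/\overline{F}(t) \to a^{-\gamma}$ as $t \to \infty$ for all $a > 0$. Let $X_1, X_2, \ldots$ be i.i.d. with distribution $F$ and let $c_n = \overline{F}^{-1}(1/n)$ (the $(1-1/n)$-quantile). Then for every $t > 0$, $\lim_{n\to\infty} P\left(c_n^{-1} \max_{1\le i \le n} X_i \le t\right) = \exp(-t^{-\gamma})$. -/

import Mathlib

/-!
Since `F̄(cₙ) = 1/n → 0` while `F̄ > 0` everywhere, the quantiles `cₙ` tend to infinity, so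
regular variation gives `n F̄(cₙ t) = F̄(cₙ t) / F̄(cₙ) → t^{-γ}`. By independence the probability
that the first `n` observations are at most `cₙ t` is `F(cₙ t)ⁿ = (1 - F̄(cₙ t))ⁿ`, which therefore
tends to `exp(-t^{-γ})`.
-/

open MeasureTheory Filter Topology

theorem Monotone.tendsto_atTop_of_tendsto_comp {α β ι : Type*} [LinearOrder α]
    [LinearOrder β] [TopologicalSpace β] [OrderTopology β] {G : α → β} (hG : Monotone G)
    {L : β} (hlt : ∀ s, G s < L) {l : Filter ι} {c : ι → α} (h : Tendsto (G ∘ c) l (𝓝 L)) :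
    Tendsto c l atTop :=
  tendsto_atTop.2 fun s =>
    (h.eventually (lt_mem_nhds (hlt s))).mono fun _ hn => (hG.reflect_lt hn).le

theorem tendsto_nat_mul_comp_mul_of_tendsto_div {tail : ℝ → ℝ} {t L : ℝ}
    (hRV : Tendsto (fun s => tail (t * s) / tail s) atTop (𝓝 L)) {c : ℕ → ℝ}
    (hc : Tendsto c atTop atTop) (hquantile : ∀ n : ℕ, 1 ≤ n → tail (c n) = 1 / n) :
    Tendsto (fun n : ℕ => n * tail (c n * t)) atTop (𝓝 L) := by
  refine (hRV.comp hc).congr' ?_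
  filter_upwards [eventually_ge_atTop 1] with n hn
  have hn0 : (n : ℝ) ≠ 0 := by positivity
  simp only [Function.comp_apply, hquantile n hn, mul_comm t]
  field_simp

theorem tendsto_pow_of_tendsto_nat_mul_one_sub {p : ℕ → ℝ} {a : ℝ}
    (h : Tendsto (fun n : ℕ => n * (1 - p n)) atTop (𝓝 a)) :
    Tendsto (fun n : ℕ => p n ^ n) atTop (𝓝 (Real.exp (-a))) := by
  have h' : Tendsto (fun n : ℕ => n * (p n - 1)) atTop (𝓝 (-a)) :=
    h.neg.congr fun n => by ring
  simpa using Real.tendsto_one_add_pow_exp_of_tendsto h'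

theorem measure_forall_lt_le_eq_pow {Ω : Type*} [MeasurableSpace Ω] {μ : Measure Ω}
    {X : ℕ → Ω → ℝ} (hindep : ProbabilityTheory.iIndepFun X μ) {s : ℝ} {p : ENNReal}
    (hp : ∀ i, μ {ω | X i ω ≤ s} = p) (n : ℕ) :
    μ {ω | ∀ i < n, X i ω ≤ s} = p ^ n := by
  have hset : {ω | ∀ i < n, X i ω ≤ s} = ⋂ i ∈ Finset.range n, X i ⁻¹' Set.Iic s := by
    ext ω
    simp
  rw [hset, hindep.meas_biInter fun i _ => ⟨Set.Iic s, measurableSet_Iic, rfl⟩]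
  exact (Finset.prod_congr rfl fun i _ => hp i).trans (by simp)

theorem stmt_14_general {Ω : Type*} [MeasurableSpace Ω] (μ : Measure Ω)
    (γ : ℝ)
    (F : ℝ → ℝ) (hsurv : ∀ t, 1 - F t > 0)
    (hRV : ∀ a : ℝ, 0 < a →
      Tendsto (fun t : ℝ => (1 - F (a * t)) / (1 - F t)) atTop (nhds (a ^ (-γ))))
    (X : ℕ → Ω → ℝ)
    (hindep : ProbabilityTheory.iIndepFun X μ)
    (hcdf : ∀ i t, μ {ω | X i ω ≤ t} = ENNReal.ofReal (F t))
    (c : ℕ → ℝ) (hc : ∀ n : ℕ, 1 ≤ n → 1 - F (c n) = 1 / n) :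
    ∀ t : ℝ, 0 < t →
      Tendsto (fun n : ℕ => (μ {ω | ∀ i < n, X i ω ≤ c n * t}).toReal) atTop
        (nhds (Real.exp (-(t ^ (-γ))))) := by
  intro t ht
  -- `F` itself is not assumed monotone; the distribution function `s ↦ μ {X 0 ≤ s}` is.
  have hc_top : Tendsto c atTop atTop := by
    refine Monotone.tendsto_atTop_of_tendsto_comp (G := fun s => μ {ω | X 0 ω ≤ s})
      (fun s u hsu => measure_mono fun ω (hω : X 0 ω ≤ s) => hω.trans hsu)
      (L := 1) (fun s => by simpa [hcdf] using hsurv s) ?_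
    have hF : Tendsto (fun n : ℕ => 1 - 1 / (n : ℝ)) atTop (𝓝 1) := by
      simpa using tendsto_one_div_atTop_nhds_zero_nat.const_sub (1 : ℝ)
    refine (ENNReal.ofReal_one ▸ ENNReal.tendsto_ofReal hF).congr' ?_
    filter_upwards [eventually_ge_atTop 1] with n hn
    simp [hcdf, ← hc n hn]
  have htail : Tendsto (fun n : ℕ => n * (1 - F (c n * t))) atTop (𝓝 (t ^ (-γ))) :=
    tendsto_nat_mul_comp_mul_of_tendsto_div (tail := fun s => 1 - F s) (hRV t ht) hc_top hc
  -- `ENNReal.ofReal` clips negative values, so `F (cₙ t) ≥ 0` is needed to read off `F (cₙ t) ^ n`.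
  have hF_one : Tendsto (fun n : ℕ => F (c n * t)) atTop (𝓝 1) := by
    have h := (htail.div_atTop tendsto_natCast_atTop_atTop).const_sub 1
    rw [sub_zero] at h
    refine h.congr' ?_
    filter_upwards [eventually_ne_atTop 0] with n hn
    field_simp
    ring
  refine (tendsto_pow_of_tendsto_nat_mul_one_sub htail).congr' ?_
  filter_upwards [hF_one.eventually (eventually_ge_nhds zero_lt_one)] with n hn
  rw [measure_forall_lt_le_eq_pow hindep (fun i => hcdf i _), ENNReal.toReal_pow,
    ENNReal.toReal_ofReal hn]

theorem stmt_14 {Ω : Type*} [MeasurableSpace Ω] (μ : Measure Ω) [IsProbabilityMeasure μ]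
    (γ : ℝ) (hγ : 0 < γ)
    (F : ℝ → ℝ) (hsurv : ∀ t, 1 - F t > 0)
    (hRV : ∀ a : ℝ, 0 < a →
      Tendsto (fun t : ℝ => (1 - F (a * t)) / (1 - F t)) atTop (nhds (a ^ (-γ))))
    (X : ℕ → Ω → ℝ) (hX : ∀ i, Measurable (X i))
    (hindep : ProbabilityTheory.iIndepFun X μ)
    (hcdf : ∀ i t, μ {ω | X i ω ≤ t} = ENNReal.ofReal (F t))
    (c : ℕ → ℝ) (hc : ∀ n : ℕ, 1 ≤ n → 1 - F (c n) = 1 / n) (hcpos : ∀ n, 0 < c n) :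
    ∀ t : ℝ, 0 < t →
      Tendsto (fun n : ℕ => (μ {ω | ∀ i < n, X i ω ≤ c n * t}).toReal) atTop
        (nhds (Real.exp (-(t ^ (-γ))))) :=
  stmt_14_general μ γ F hsurv hRV X hindep hcdf c hc
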